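/- Let V be a vector space with symmetric bilinear form f whose radical is R = Rad(f), and let a, b ∈ V with f(a,b) ≠ 0. Then {a,b}^⊥⊥ = span(a,b) + R when dim(V/R) is finite. -/

import Mathlib

/-- The perp of a set `S` with respect to a bilinear form `f`. -/
def bilinPerp {K V : Type*} [Field K] [AddCommGroup V] [Module K V]
    (f : V →ₗ[K] V →ₗ[K] K) (S : Set V) : Submodule K V where
  carrier := {v | ∀ s ∈ S, f v s = 0}
  add_mem' := fun ha hb s hs => by simp [ha s hs, hb s hs]
  zero_mem' := fun s hs => by simp
  smul_mem' := fun c a ha s hs => by simp [ha s hs]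

/-!
For a finite-dimensional subspace `W`, let `Φ : V → W^*` send `x` to `f x` restricted to `W`,
so that `W^⊥ = ker Φ`. If `v ∈ W^⊥⊥`, the functional `f(·, v)` vanishes on `ker Φ`, hence factors
through `Φ` via some functional on `W^*`; since `W` is finite-dimensional, that functional is
evaluation at some `w ∈ W`. Then `f(·, v) = f(·, w)`, so `v - w` lies in the radical.
-/

section

variable {K V : Type*} [Field K] [AddCommGroup V] [Module K V] {f : V →ₗ[K] V →ₗ[K] K}

theorem bilinPerp_span (S : Set V) : bilinPerp f (Submodule.span K S) = bilinPerp f S := by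
  refine le_antisymm (fun x hx s hs => hx s (Submodule.subset_span hs)) fun x hx s hs => ?_
  induction hs using Submodule.span_induction with
  | mem s hs => exact hx s hs
  | zero => exact map_zero (f x)
  | add s t _ _ hs ht => rw [map_add, hs, ht, add_zero]
  | smul c s _ hs => rw [map_smul, hs, smul_zero]

theorem bilinPerp_eq_ker_dualMap_comp (W : Submodule K V) :
    bilinPerp f W = LinearMap.ker (W.subtype.dualMap ∘ₗ f) := by
  ext x
  simp [bilinPerp, LinearMap.ext_iff]

theorem span_sup_radical_le_bilinPerp_bilinPerp (hf : ∀ x y, f x y = f y x) (S : Set V) :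
    Submodule.span K S ⊔ bilinPerp f Set.univ ≤ bilinPerp f (bilinPerp f S) := by
  refine sup_le ?_ fun r hr u _ => hr u trivial
  rw [Submodule.span_le]
  intro s hs u hu
  rw [hf]
  exact hu s hs

theorem bilinPerp_bilinPerp_le_sup_radical (hf : ∀ x y, f x y = f y x)
    (W : Submodule K V) [FiniteDimensional K W] :
    bilinPerp f (bilinPerp f W) ≤ W ⊔ bilinPerp f Set.univ := by
  intro v hv
  have hv_ann : f.flip v ∈ (LinearMap.ker (W.subtype.dualMap ∘ₗ f)).dualAnnihilator := by
    rw [← bilinPerp_eq_ker_dualMap_comp, Submodule.mem_dualAnnihilator]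
    intro u hu
    rw [LinearMap.flip_apply, ← hf]
    exact hv u hu
  rw [← LinearMap.range_dualMap_eq_dualAnnihilator_ker] at hv_ann
  obtain ⟨ψ, hψ⟩ := hv_ann
  set w : W := (Module.evalEquiv K W).symm ψ
  have hvw (x : V) : f x v = f x w :=
    calc f x v = ψ (W.subtype.dualMap (f x)) := (LinearMap.congr_fun hψ x).symm
      _ = f x w := (Module.apply_evalEquiv_symm_apply K W _ ψ).symm
  refine Submodule.mem_sup.2 ⟨w, w.2, v - w, fun y _ => ?_, add_sub_cancel _ _⟩
  rw [hf, map_sub, hvw, sub_self]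

theorem bilinPerp_bilinPerp_of_finite (hf : ∀ x y, f x y = f y x) {S : Set V} (hS : S.Finite) :
    bilinPerp f (bilinPerp f S) = Submodule.span K S ⊔ bilinPerp f Set.univ := by
  have := FiniteDimensional.span_of_finite K hS
  refine le_antisymm ?_ (span_sup_radical_le_bilinPerp_bilinPerp hf S)
  rw [← bilinPerp_span S]
  exact bilinPerp_bilinPerp_le_sup_radical hf _

end

theorem double_perp_eq_span_sup_radical_general
    {K V : Type*} [Field K] [AddCommGroup V] [Module K V]
    (f : V →ₗ[K] V →ₗ[K] K)
    (hsymm : ∀ x y : V, f x y = f y x)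
    (R : Submodule K V) (hR : R = bilinPerp f (Set.univ : Set V))
    (a b : V) :
    bilinPerp f (bilinPerp f {a, b} : Submodule K V) =
      Submodule.span K ({a, b} : Set V) ⊔ R := by
  subst hR
  exact bilinPerp_bilinPerp_of_finite hsymm (Set.toFinite _)

/-- For a symmetric bilinear form `f` with radical `R = Rad(f)` such that `V/R` is
finite-dimensional, and `a, b` with `f a b ≠ 0`, the double perp of `{a, b}` equals
`span {a, b} + R`. -/
theorem double_perp_eq_span_sup_radical
    {K V : Type*} [Field K] [AddCommGroup V] [Module K V]
    (f : V →ₗ[K] V →ₗ[K] K)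
    (hsymm : ∀ x y : V, f x y = f y x)
    (R : Submodule K V) (hR : R = bilinPerp f (Set.univ : Set V))
    [FiniteDimensional K (V ⧸ R)]
    (a b : V) (hab : f a b ≠ 0) :
    bilinPerp f (bilinPerp f {a, b} : Submodule K V) =
      Submodule.span K ({a, b} : Set V) ⊔ R :=
  double_perp_eq_span_sup_radical_general f hsymm R hR a b
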